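/- Let H be a complete multipartite graph with t vertices and m edges such that m > t, and let Ḡ be the disjoint union of H with m − t copies of the star K_{1,m−1}. Then Ḡ has exactly as many edges as vertices, every vertex of Ḡ has co-betweenness 1/(m−t), and the complement G of Ḡ is a betweenness-uniform graph with betweenness value 1. -/

import Mathlib

open SimpleGraph Finset BigOperators

namespace BUG

variable {V : Type*}

/-- Number of shortest `v`–`w` paths (walks of length `dist v w`). -/
noncomputable def sigma (G : SimpleGraph V) (v w : V) : ℕ :=
  Nat.card {p : G.Walk v w // p.length = G.dist v w}

/-- Number of shortest `v`–`w` paths containing `x` as an internal vertex. -/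
noncomputable def sigmaVia (G : SimpleGraph V) (v w x : V) : ℕ :=
  Nat.card {p : G.Walk v w // p.length = G.dist v w ∧ x ∈ p.support ∧ x ≠ v ∧ x ≠ w}

/-- Betweenness centrality of a vertex. -/
noncomputable def btw [Fintype V] [DecidableEq V] (G : SimpleGraph V) (x : V) : ℝ :=
  (1/2) * ∑ v : V, ∑ w : V,
    if v ≠ w then (sigmaVia G v w x : ℝ) / (sigma G v w : ℝ) else 0

/-- Average betweenness centrality of a graph. -/
noncomputable def avgBtw [Fintype V] [DecidableEq V] (G : SimpleGraph V) : ℝ :=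
  (∑ x : V, btw G x) / (Fintype.card V)

/-- A graph is betweenness-uniform (a BUG) if all vertices have equal betweenness. -/
def IsBUG [Fintype V] [DecidableEq V] (G : SimpleGraph V) : Prop :=
  ∀ x y : V, btw G x = btw G y

/-- Vertices close to the edge `e`: its endpoints and their neighbours. -/
def closeSet (H : SimpleGraph V) (e : Sym2 V) : Set V :=
  {v | ∃ u ∈ e, v = u ∨ H.Adj v u}

/-- Edges close to the vertex `x`. -/
def closeEdges (H : SimpleGraph V) (x : V) : Set (Sym2 V) :=
  {e ∈ H.edgeSet | x ∈ closeSet H e}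

/-- Weight of an edge: `1/(n - |closeSet e|)`. -/
noncomputable def weight [Fintype V] (H : SimpleGraph V) (e : Sym2 V) : ℝ :=
  1 / ((Fintype.card V : ℝ) - (closeSet H e).ncard)

open Classical in
/-- Co-betweenness of a vertex: total weight of the edges close to it. -/
noncomputable def coB [Fintype V] [DecidableEq V] (H : SimpleGraph V) (x : V) : ℝ :=
  ∑ e : Sym2 V, if e ∈ closeEdges H x then weight H e else 0

open Classical in
/-- Total weight of all edges of `H`. -/
noncomputable def totalWeight [Fintype V] [DecidableEq V] (H : SimpleGraph V) : ℝ :=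
  ∑ e : Sym2 V, if e ∈ H.edgeSet then weight H e else 0

/-- `C` is (the vertex set of) a connected component of `B`. -/
def IsComponent (B : SimpleGraph V) (C : Set V) : Prop :=
  C.Nonempty ∧ (∀ u ∈ C, ∀ v, B.Adj u v → v ∈ C) ∧ (B.induce C).Connected

/-- The star `K_{1,ℓ}` with center `0`. -/
def starG (ℓ : ℕ) : SimpleGraph (Fin (ℓ+1)) :=
  SimpleGraph.fromRel (fun i _ => i = 0)

/-- Disjoint union of two graphs. -/
def sumGraph {α β : Type*} (G : SimpleGraph α) (H : SimpleGraph β) :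
    SimpleGraph (α ⊕ β) where
  Adj x y := Sum.LiftRel G.Adj H.Adj x y
  symm := by constructor; rintro (a|a) (b|b) h <;> cases h <;> constructor <;> apply SimpleGraph.Adj.symm <;>
    assumption
  loopless := by constructor; rintro (a|a) h <;> cases h <;> exact SimpleGraph.irrefl _ ‹_›

/-- Disjoint union of `k` copies of a graph `H`. -/
def copies {β : Type*} (k : ℕ) (H : SimpleGraph β) : SimpleGraph (Fin k × β) where
  Adj p q := p.1 = q.1 ∧ H.Adj p.2 q.2
  symm := by constructor; rintro ⟨a,i⟩ ⟨b,j⟩ ⟨h1,h2⟩; exact ⟨h1.symm, h2.symm⟩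
  loopless := by constructor; rintro ⟨a,i⟩ ⟨-,h⟩; exact SimpleGraph.irrefl _ h




section Walks
variable {V : Type*} {G : SimpleGraph V} {v w x : V}

lemma walk_length_one_eq (h : G.Adj v w) (p : G.Walk v w) (hp : p.length = 1) :
    p = SimpleGraph.Walk.cons h SimpleGraph.Walk.nil := by
  cases p with
  | nil => simp at hp
  | cons h' q =>
    cases q with
    | nil => rfl
    | cons h'' r => simp [SimpleGraph.Walk.length_cons] at hp

lemma walk_length_two_eq (p : G.Walk v w) (hp : p.length = 2) :
    ∃ (y : V) (h1 : G.Adj v y) (h2 : G.Adj y w),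
      p = SimpleGraph.Walk.cons h1 (SimpleGraph.Walk.cons h2 SimpleGraph.Walk.nil) := by
  cases p with
  | nil => simp at hp
  | cons h' q =>
    cases q with
    | nil => simp at hp
    | cons h'' r =>
      cases r with
      | nil => exact ⟨_, h', h'', rfl⟩
      | cons h''' s => simp [SimpleGraph.Walk.length_cons] at hp

lemma sigma_adj (h : G.Adj v w) : sigma G v w = 1 := by
  have hd : G.dist v w = 1 := dist_eq_one_iff_adj.mpr h
  rw [sigma, Nat.card_eq_one_iff_unique]
  constructor
  · constructor
    rintro ⟨p, hp⟩ ⟨q, hq⟩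
    rw [hd] at hp hq
    exact Subtype.ext ((walk_length_one_eq h p hp).trans (walk_length_one_eq h q hq).symm)
  · exact ⟨⟨.cons h .nil, by simp [hd]⟩⟩

lemma sigmaVia_adj (h : G.Adj v w) (x : V) : sigmaVia G v w x = 0 := by
  have hd : G.dist v w = 1 := dist_eq_one_iff_adj.mpr h
  rw [sigmaVia]
  have : IsEmpty {p : G.Walk v w // p.length = G.dist v w ∧ x ∈ p.support ∧ x ≠ v ∧ x ≠ w} := by
    constructor
    rintro ⟨p, hp, hx, hxv, hxw⟩
    rw [hd] at hp
    rw [walk_length_one_eq h p hp] at hx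
    simp only [SimpleGraph.Walk.support_cons, SimpleGraph.Walk.support_nil,
      List.mem_cons, List.mem_singleton] at hx
    rcases hx with rfl | rfl | h' <;> simp_all
  simp [Nat.card_of_isEmpty]

lemma dist_eq_two (hne : v ≠ w) (hadj : ¬G.Adj v w) {y : V} (h1 : G.Adj v y)
    (h2 : G.Adj y w) : G.dist v w = 2 := by
  have hr : G.Reachable v w := ⟨.cons h1 (.cons h2 .nil)⟩
  have hle : G.dist v w ≤ 2 := by
    simpa using SimpleGraph.dist_le (.cons h1 (.cons h2 (.nil : G.Walk w w)))
  have h0 : G.dist v w ≠ 0 := by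
    rw [ne_eq, hr.dist_eq_zero_iff]; exact hne
  have h1' : G.dist v w ≠ 1 := by
    rw [ne_eq, dist_eq_one_iff_adj]; exact hadj
  omega

lemma sigma_two (hd : G.dist v w = 2) :
    sigma G v w = Nat.card {y : V // G.Adj v y ∧ G.Adj y w} := by
  rw [sigma]
  apply Nat.card_congr
  refine ⟨fun p => ⟨p.1.getVert 1, ?_, ?_⟩,
    fun y => ⟨.cons y.2.1 (.cons y.2.2 .nil), by simp [hd]⟩, ?_, ?_⟩
  · have := p.1.adj_getVert_succ (i := 0) (by rw [p.2, hd]; norm_num)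
    simpa using this
  · have := p.1.adj_getVert_succ (i := 1) (by rw [p.2, hd]; norm_num)
    have h2 : p.1.getVert 2 = w := by
      have hp2 : p.1.length = 2 := p.2.trans hd
      have := p.1.getVert_length
      rwa [hp2] at this
    rwa [h2] at this
  · rintro ⟨p, hp⟩
    rw [hd] at hp
    obtain ⟨y, hy1, hy2, rfl⟩ := walk_length_two_eq p hp
    simp [SimpleGraph.Walk.getVert_cons_succ]
    rfl
  · rintro ⟨y, hy1, hy2⟩
    simp [SimpleGraph.Walk.getVert_cons_succ]

open scoped Classical in
lemma sigmaVia_two (hd : G.dist v w = 2) (x : V) :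
    sigmaVia G v w x = if G.Adj v x ∧ G.Adj x w then 1 else 0 := by
  rw [sigmaVia]
  split_ifs with h
  · rw [Nat.card_eq_one_iff_unique]
    constructor
    · constructor
      rintro ⟨p, hp, hxp, hxv, hxw⟩ ⟨q, hq, hxq, hxv', hxw'⟩
      rw [hd] at hp hq
      obtain ⟨y, hy1, hy2, rfl⟩ := walk_length_two_eq p hp
      obtain ⟨z, hz1, hz2, rfl⟩ := walk_length_two_eq q hq
      have hxy : x = y := by
        simp only [SimpleGraph.Walk.support_cons, SimpleGraph.Walk.support_nil,
          List.mem_cons, List.mem_singleton] at hxp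
        rcases hxp with rfl | rfl | rfl | h' <;> simp_all
      have hxz : x = z := by
        simp only [SimpleGraph.Walk.support_cons, SimpleGraph.Walk.support_nil,
          List.mem_cons, List.mem_singleton] at hxq
        rcases hxq with rfl | rfl | rfl | h' <;> simp_all
      subst hxy; subst hxz
      rfl
    · refine ⟨⟨.cons h.1 (.cons h.2 .nil), by simp [hd], by simp, h.1.ne', h.2.ne⟩⟩
  · have : IsEmpty {p : G.Walk v w //
        p.length = G.dist v w ∧ x ∈ p.support ∧ x ≠ v ∧ x ≠ w} := by
      constructor
      rintro ⟨p, hp, hxp, hxv, hxw⟩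
      rw [hd] at hp
      obtain ⟨y, hy1, hy2, rfl⟩ := walk_length_two_eq p hp
      have hxy : x = y := by
        simp only [SimpleGraph.Walk.support_cons, SimpleGraph.Walk.support_nil,
          List.mem_cons, List.mem_singleton] at hxp
        rcases hxp with rfl | rfl | rfl | h' <;> simp_all
      subst hxy
      exact h ⟨hy1, hy2⟩
    simp [Nat.card_of_isEmpty]

end Walks

lemma mem_closeSet_iff (B : SimpleGraph V) (u v z : V) :
    z ∈ closeSet B s(u, v) ↔ z = u ∨ z = v ∨ B.Adj z u ∨ B.Adj z v := by
  simp only [closeSet, Set.mem_setOf_eq, Sym2.mem_iff]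
  constructor
  · rintro ⟨a, (rfl | rfl), (rfl | h)⟩ <;> tauto
  · rintro (rfl | rfl | h | h)
    exacts [⟨z, Or.inl rfl, Or.inl rfl⟩, ⟨z, Or.inr rfl, Or.inl rfl⟩,
      ⟨u, Or.inl rfl, Or.inr h⟩, ⟨v, Or.inr rfl, Or.inr h⟩]

lemma compl_closeSet (B : SimpleGraph V) (v w : V) :
    (closeSet B s(v, w))ᶜ = {y | Bᶜ.Adj v y ∧ Bᶜ.Adj y w} := by
  ext y
  simp only [Set.mem_compl_iff, mem_closeSet_iff, Set.mem_setOf_eq, compl_adj]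
  rw [B.adj_comm y v]
  constructor
  · intro h
    push_neg at h
    exact ⟨⟨Ne.symm h.1, h.2.2.1⟩, ⟨h.2.1, h.2.2.2⟩⟩
  · rintro ⟨⟨h1, h2⟩, ⟨h3, h4⟩⟩
    push_neg
    exact ⟨Ne.symm h1, h3, h2, h4⟩

open scoped Classical in
lemma sum_edgeFinset_eq_half [Fintype V] (B : SimpleGraph V) (f : Sym2 V → ℝ) :
    ∑ e ∈ B.edgeFinset, f e
      = (1/2) * ∑ v : V, ∑ w : V, (if B.Adj v w then f s(v, w) else 0) := by
  have key : ∑ p ∈ univ.filter (fun p : V × V => B.Adj p.1 p.2), f (Sym2.mk p.1 p.2)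
      = ∑ e ∈ B.edgeFinset, 2 * f e := by
    rw [← Finset.sum_fiberwise_of_maps_to (g := fun p : V × V => Sym2.mk p.1 p.2)
      (t := B.edgeFinset) (fun p hp => by
        simp only [mem_filter] at hp
        simpa [mem_edgeFinset] using hp.2) (fun p => f (Sym2.mk p.1 p.2))]
    refine Finset.sum_congr rfl (fun e he => ?_)
    induction e using Sym2.ind with
    | _ u v =>
      have hadj : B.Adj u v := by simpa [mem_edgeFinset] using he
      have hne : u ≠ v := hadj.ne
      have hfib : (univ.filter (fun p : V × V => B.Adj p.1 p.2)).filter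
          (fun p => Sym2.mk p.1 p.2 = s(u, v)) = {(u, v), (v, u)} := by
        ext ⟨a, b⟩
        simp only [mem_filter, mem_univ, true_and, mem_insert, mem_singleton,
          Prod.mk.injEq, Sym2.eq_iff]
        constructor
        · rintro ⟨-, (⟨rfl, rfl⟩ | ⟨rfl, rfl⟩)⟩ <;> tauto
        · rintro (⟨rfl, rfl⟩ | ⟨rfl, rfl⟩)
          exacts [⟨hadj, Or.inl ⟨rfl, rfl⟩⟩, ⟨hadj.symm, Or.inr ⟨rfl, rfl⟩⟩]
      rw [hfib]
      rw [Finset.sum_insert (by simp [hne]), Finset.sum_singleton]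
      have : Sym2.mk (u, v).1 (u, v).2 = s(u, v) := rfl
      have h2 : Sym2.mk (v, u).1 (v, u).2 = s(u, v) := Sym2.eq_swap
      rw [this, h2]
      ring
  have lhs : ∑ v : V, ∑ w : V, (if B.Adj v w then f s(v, w) else 0)
      = ∑ p ∈ univ.filter (fun p : V × V => B.Adj p.1 p.2), f (Sym2.mk p.1 p.2) := by
    rw [Finset.sum_filter, Fintype.sum_prod_type]
  rw [lhs, key]
  rw [Finset.mul_sum]
  refine Finset.sum_congr rfl (fun e he => by ring)


open scoped Classical in
lemma term_eq [Fintype V] [DecidableEq V] (B : SimpleGraph V)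
    (hcs : ∀ v w : V, B.Adj v w → (closeSet B s(v, w)).ncard < Fintype.card V)
    (x v w : V) :
    (if v ≠ w then (sigmaVia Bᶜ v w x : ℝ) / (sigma Bᶜ v w : ℝ) else 0)
    = if B.Adj v w then
        (if x ∈ closeSet B s(v, w) then 0
         else 1 / ((Fintype.card V : ℝ) - (closeSet B s(v, w)).ncard))
      else 0 := by
  by_cases hvw : v = w
  · subst hvw; simp
  rw [if_pos hvw]
  by_cases hadj : B.Adj v w
  · have hnadj : ¬ Bᶜ.Adj v w := by simp [compl_adj, hadj]
    have hset := compl_closeSet B v w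
    have hlt : (closeSet B s(v, w)).ncard < Fintype.card V := hcs v w hadj
    have hcompl : ((closeSet B s(v, w))ᶜ).ncard
        = Fintype.card V - (closeSet B s(v, w)).ncard := by
      have h := Set.ncard_add_ncard_compl (closeSet B s(v, w))
      rw [Nat.card_eq_fintype_card] at h
      omega
    have hne0 : ((closeSet B s(v, w))ᶜ).ncard ≠ 0 := by omega
    obtain ⟨y, hy⟩ := Set.nonempty_of_ncard_ne_zero hne0
    rw [hset] at hy
    have hd : Bᶜ.dist v w = 2 := dist_eq_two hvw hnadj hy.1 hy.2
    have hsig : sigma Bᶜ v w = Fintype.card V - (closeSet B s(v, w)).ncard := by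
      rw [sigma_two hd, ← hcompl, hset]
      exact Nat.card_coe_set_eq _
    rw [sigmaVia_two hd x, if_pos hadj, hsig]
    by_cases hx : x ∈ closeSet B s(v, w)
    · rw [if_pos hx]
      have : ¬ (Bᶜ.Adj v x ∧ Bᶜ.Adj x w) := by
        intro hc
        have : x ∈ (closeSet B s(v, w))ᶜ := by rw [hset]; exact hc
        exact this hx
      rw [if_neg this]
      simp
    · rw [if_neg hx]
      have hmem : (Bᶜ.Adj v x ∧ Bᶜ.Adj x w) := by
        have : x ∈ (closeSet B s(v, w))ᶜ := hx
        rwa [hset] at this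
      rw [if_pos hmem]
      rw [Nat.cast_sub hlt.le]
      norm_num
  · have hca : Bᶜ.Adj v w := by rw [compl_adj]; exact ⟨hvw, hadj⟩
    rw [sigmaVia_adj hca x, if_neg hadj]
    simp

open scoped Classical in
lemma btw_compl_eq [Fintype V] [DecidableEq V] (B : SimpleGraph V)
    (hcs : ∀ v w : V, B.Adj v w → (closeSet B s(v, w)).ncard < Fintype.card V)
    (x : V) :
    btw Bᶜ x = (1/2) * ∑ v : V, ∑ w : V,
      (if B.Adj v w then
        (if x ∈ closeSet B s(v, w) then 0
         else 1 / ((Fintype.card V : ℝ) - (closeSet B s(v, w)).ncard))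
      else 0) := by
  rw [btw]
  congr 1
  refine Finset.sum_congr rfl fun v _ => Finset.sum_congr rfl fun w _ => ?_
  exact term_eq B hcs x v w

open scoped Classical in
lemma coB_eq_half [Fintype V] [DecidableEq V] (B : SimpleGraph V) (x : V) :
    coB B x = (1/2) * ∑ v : V, ∑ w : V,
      (if B.Adj v w then
        (if x ∈ closeSet B s(v, w) then weight B s(v, w) else 0) else 0) := by
  rw [coB]
  rw [← sum_edgeFinset_eq_half B (fun e => if x ∈ closeSet B e then weight B e else 0)]
  rw [← Finset.univ_inter B.edgeFinset, ← Finset.sum_ite_mem]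
  refine Finset.sum_congr rfl (fun e _ => ?_)
  have hmem : e ∈ closeEdges B x ↔ e ∈ B.edgeSet ∧ x ∈ closeSet B e := by
    simp [closeEdges, Set.mem_sep_iff]
  by_cases h1 : e ∈ B.edgeSet <;> by_cases h2 : x ∈ closeSet B e <;>
    simp [hmem, mem_edgeFinset, h1, h2]


section Concrete
variable {VH : Type*} [Fintype VH] [DecidableEq VH] (H : SimpleGraph VH) (k ℓ : ℕ)
set_option linter.unusedSectionVars false

local notation "W" => Fin k × Fin (ℓ+1)
local notation "B" => sumGraph H (copies k (starG ℓ))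

lemma star_adj (i j : Fin (ℓ+1)) : (starG ℓ).Adj i j ↔ i ≠ j ∧ (i = 0 ∨ j = 0) := by
  simp [starG]

lemma adj_ll (a b : VH) : (B).Adj (Sum.inl a) (Sum.inl b) ↔ H.Adj a b := by
  simp [sumGraph]

lemma adj_rr (p q : W) :
    (B).Adj (Sum.inr p) (Sum.inr q) ↔ p.1 = q.1 ∧ (starG ℓ).Adj p.2 q.2 := by
  constructor
  · rintro ⟨⟩; exact ‹_›
  · intro h; exact Sum.LiftRel.inr h

lemma adj_lr (a : VH) (q : W) : ¬ (B).Adj (Sum.inl a) (Sum.inr q) := by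
  rintro ⟨⟩

lemma adj_rl (p : W) (b : VH) : ¬ (B).Adj (Sum.inr p) (Sum.inl b) := by
  rintro ⟨⟩

open scoped Classical in
lemma star_double :
    ∑ j : Fin (ℓ+1), ∑ j' : Fin (ℓ+1),
      (if (starG ℓ).Adj j j' then (1:ℝ) else 0) = 2 * ℓ := by
  have inner : ∀ j : Fin (ℓ+1),
      ∑ j' : Fin (ℓ+1), (if (starG ℓ).Adj j j' then (1:ℝ) else 0)
        = if j = 0 then (ℓ:ℝ) else 1 := by
    intro j
    by_cases hj : j = 0
    · subst hj
      rw [if_pos rfl]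
      have : ∀ j' : Fin (ℓ+1),
          (if (starG ℓ).Adj 0 j' then (1:ℝ) else 0) = if j' = 0 then 0 else 1 := by
        intro j'
        rw [star_adj]
        by_cases h : j' = 0 <;> simp [h, Ne.symm]
      rw [Finset.sum_congr rfl fun j' _ => this j']
      have h2 : ∀ j' : Fin (ℓ+1), (if j' = 0 then (0:ℝ) else 1)
          = 1 - (if j' = 0 then (1:ℝ) else 0) := by
        intro j'; split_ifs <;> ring
      rw [Finset.sum_congr rfl fun j' _ => h2 j', Finset.sum_sub_distrib]
      simp [Finset.card_univ]
    · rw [if_neg hj]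
      have : ∀ j' : Fin (ℓ+1),
          (if (starG ℓ).Adj j j' then (1:ℝ) else 0) = if j' = 0 then 1 else 0 := by
        intro j'
        rw [star_adj]
        by_cases h : j' = 0
        · subst h; simp [hj]
        · simp [h, hj]
      rw [Finset.sum_congr rfl fun j' _ => this j']
      simp
  rw [Finset.sum_congr rfl fun j _ => inner j]
  have : ∀ j : Fin (ℓ+1), (if j = 0 then (ℓ:ℝ) else 1)
      = (if j = 0 then (ℓ:ℝ) - 1 else 0) + 1 := by
    intro j; split_ifs <;> ring
  rw [Finset.sum_congr rfl fun j _ => this j, Finset.sum_add_distrib]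
  simp [Finset.card_univ]
  ring

open scoped Classical in
lemma H_double :
    ∑ a : VH, ∑ b : VH, (if H.Adj a b then (1:ℝ) else 0)
      = 2 * H.edgeFinset.card := by
  have := sum_edgeFinset_eq_half H (fun _ => (1:ℝ))
  simp only [Finset.sum_const, nsmul_eq_mul, mul_one] at this
  rw [this]; ring

open scoped Classical in
lemma double_sum_eval (Ψ : (VH ⊕ W) → (VH ⊕ W) → ℝ) (φ : ℝ) (ψ : Fin k → ℝ)
    (h1 : ∀ a b, H.Adj a b → Ψ (Sum.inl a) (Sum.inl b) = φ)
    (h2 : ∀ (i : Fin k) (p q : Fin (ℓ+1)), (starG ℓ).Adj p q →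
      Ψ (Sum.inr (i,p)) (Sum.inr (i,q)) = ψ i) :
    ∑ v : VH ⊕ W, ∑ w : VH ⊕ W, (if (B).Adj v w then Ψ v w else 0)
      = φ * (2 * H.edgeFinset.card) + (∑ i : Fin k, ψ i) * (2 * ℓ) := by
  rw [Fintype.sum_sum_type]
  have eLL : ∑ a : VH, ∑ w : VH ⊕ W, (if (B).Adj (Sum.inl a) w then Ψ (Sum.inl a) w else 0)
      = φ * (2 * H.edgeFinset.card) := by
    have : ∀ a : VH, ∑ w : VH ⊕ W, (if (B).Adj (Sum.inl a) w then Ψ (Sum.inl a) w else 0)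
        = ∑ b : VH, (if H.Adj a b then (1:ℝ) else 0) * φ := by
      intro a
      rw [Fintype.sum_sum_type]
      have z2 : ∑ q : W, (if (B).Adj (Sum.inl a) (Sum.inr q) then Ψ (Sum.inl a) (Sum.inr q) else 0) = 0 := by
        refine Finset.sum_eq_zero fun q _ => ?_
        rw [if_neg (adj_lr H k ℓ a q)]
      rw [z2, add_zero]
      refine Finset.sum_congr rfl fun b _ => ?_
      rw [adj_ll]
      by_cases h : H.Adj a b
      · rw [if_pos h, if_pos h, h1 a b h]; ring
      · rw [if_neg h, if_neg h]; ring
    rw [Finset.sum_congr rfl fun a _ => this a]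
    simp only [← Finset.sum_mul]
    rw [H_double H]
    ring
  have eRR : ∑ p : W, ∑ w : VH ⊕ W, (if (B).Adj (Sum.inr p) w then Ψ (Sum.inr p) w else 0)
      = (∑ i : Fin k, ψ i) * (2 * ℓ) := by
    have step1 : ∀ p : W,
        ∑ w : VH ⊕ W, (if (B).Adj (Sum.inr p) w then Ψ (Sum.inr p) w else 0)
        = (∑ j' : Fin (ℓ+1), (if (starG ℓ).Adj p.2 j' then (1:ℝ) else 0)) * ψ p.1 := by
      intro p
      rw [Fintype.sum_sum_type]
      have z1 : ∑ b : VH, (if (B).Adj (Sum.inr p) (Sum.inl b) then Ψ (Sum.inr p) (Sum.inl b) else 0) = 0 := by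
        refine Finset.sum_eq_zero fun b _ => ?_
        rw [if_neg (adj_rl H k ℓ p b)]
      rw [z1, zero_add]
      rw [Fintype.sum_prod_type]
      have hin : ∀ i' : Fin k, ∑ j' : Fin (ℓ+1),
          (if (B).Adj (Sum.inr p) (Sum.inr (i', j')) then Ψ (Sum.inr p) (Sum.inr (i', j')) else 0)
          = if p.1 = i' then ∑ j' : Fin (ℓ+1), (if (starG ℓ).Adj p.2 j' then (1:ℝ) else 0) * ψ p.1 else 0 := by
        intro i'
        by_cases hi : p.1 = i'
        · rw [if_pos hi]
          refine Finset.sum_congr rfl fun j' _ => ?_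
          rw [adj_rr]
          by_cases hA : (starG ℓ).Adj p.2 j'
          · rw [if_pos ⟨hi, hA⟩, if_pos hA]
            have := h2 p.1 p.2 j' hA
            rw [← hi]
            rw [show ((p.1, p.2) : W) = p from rfl] at this
            rw [this]; ring
          · rw [if_neg (by tauto), if_neg hA]; ring
        · rw [if_neg hi]
          refine Finset.sum_eq_zero fun j' _ => ?_
          rw [adj_rr, if_neg (by tauto)]
      rw [Finset.sum_congr rfl fun i' _ => hin i']
      rw [Finset.sum_ite_eq Finset.univ p.1
        (fun _ => ∑ j' : Fin (ℓ+1), (if (starG ℓ).Adj p.2 j' then (1:ℝ) else 0) * ψ p.1)]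
      rw [if_pos (Finset.mem_univ _)]
      rw [← Finset.sum_mul]
    rw [Finset.sum_congr rfl fun p _ => step1 p]
    rw [Fintype.sum_prod_type]
    have : ∀ i : Fin k,
        ∑ j : Fin (ℓ+1), (∑ j' : Fin (ℓ+1), (if (starG ℓ).Adj j j' then (1:ℝ) else 0)) * ψ i
        = (2 * ℓ) * ψ i := by
      intro i
      rw [← Finset.sum_mul, star_double]
    rw [Finset.sum_congr rfl fun i _ => this i]
    rw [← Finset.mul_sum]
    ring
  rw [eLL, eRR]

lemma closeSet_rr (i : Fin k) {p q : Fin (ℓ+1)} (h : (starG ℓ).Adj p q) :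
    closeSet (B) s(Sum.inr (i,p), Sum.inr (i,q))
      = Set.range (fun j : Fin (ℓ+1) => (Sum.inr (i, j) : VH ⊕ W)) := by
  ext z
  rw [mem_closeSet_iff]
  constructor
  · rintro (rfl | rfl | hz | hz)
    · exact ⟨p, rfl⟩
    · exact ⟨q, rfl⟩
    · cases z with
      | inl a => exact absurd hz (adj_lr H k ℓ a _)
      | inr r =>
        obtain ⟨h1, -⟩ := (adj_rr H k ℓ r (i,p)).mp hz
        exact ⟨r.2, by rw [← Prod.mk.eta (p := r), h1]⟩
    · cases z with
      | inl a => exact absurd hz (adj_lr H k ℓ a _)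
      | inr r =>
        obtain ⟨h1, -⟩ := (adj_rr H k ℓ r (i,q)).mp hz
        exact ⟨r.2, by rw [← Prod.mk.eta (p := r), h1]⟩
  · rintro ⟨j, rfl⟩
    obtain ⟨hpq, hp0 | hq0⟩ := (star_adj ℓ p q).mp h
    · by_cases hjp : j = p
      · exact Or.inl (by rw [hjp])
      · refine Or.inr (Or.inr (Or.inl ?_))
        exact (adj_rr H k ℓ (i,j) (i,p)).mpr ⟨rfl, (star_adj ℓ j p).mpr ⟨hjp, Or.inr hp0⟩⟩
    · by_cases hjq : j = q
      · exact Or.inr (Or.inl (by rw [hjq]))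
      · refine Or.inr (Or.inr (Or.inr ?_))
        exact (adj_rr H k ℓ (i,j) (i,q)).mpr ⟨rfl, (star_adj ℓ j q).mpr ⟨hjq, Or.inr hq0⟩⟩

lemma ncard_range_inr (i : Fin k) :
    (Set.range (fun j : Fin (ℓ+1) => (Sum.inr (i, j) : VH ⊕ W))).ncard = ℓ + 1 := by
  rw [← Nat.card_coe_set_eq]
  rw [Nat.card_range_of_injective (f := fun j : Fin (ℓ+1) => (Sum.inr (i, j) : VH ⊕ W))
    (fun a b hab => by simpa using hab)]
  simp

lemma closeSet_ll (hcm : ∀ x y z : VH, Hᶜ.Adj x y → Hᶜ.Adj y z → x ≠ z → Hᶜ.Adj x z)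
    {a b : VH} (h : H.Adj a b) :
    closeSet (B) s(Sum.inl a, Sum.inl b) = Set.range (Sum.inl : VH → VH ⊕ W) := by
  ext z
  rw [mem_closeSet_iff]
  constructor
  · rintro (rfl | rfl | hz | hz)
    · exact ⟨a, rfl⟩
    · exact ⟨b, rfl⟩
    · cases z with
      | inl c => exact ⟨c, rfl⟩
      | inr r => exact absurd hz (adj_rl H k ℓ r a)
    · cases z with
      | inl c => exact ⟨c, rfl⟩
      | inr r => exact absurd hz (adj_rl H k ℓ r b)
  · rintro ⟨c, rfl⟩
    by_cases hca : c = a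
    · exact Or.inl (by rw [hca])
    by_cases hcb : c = b
    · exact Or.inr (Or.inl (by rw [hcb]))
    by_cases hAa : H.Adj c a
    · exact Or.inr (Or.inr (Or.inl ((adj_ll H k ℓ c a).mpr hAa)))
    by_cases hAb : H.Adj c b
    · exact Or.inr (Or.inr (Or.inr ((adj_ll H k ℓ c b).mpr hAb)))
    exfalso
    have h1 : Hᶜ.Adj a c := by
      rw [compl_adj]
      exact ⟨Ne.symm hca, fun hc => hAa (hc.symm)⟩
    have h2 : Hᶜ.Adj c b := by
      rw [compl_adj]
      exact ⟨hcb, hAb⟩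
    exact ((hcm a c b h1 h2 h.ne).2) h

lemma ncard_range_inl :
    (Set.range (Sum.inl : VH → VH ⊕ W)).ncard = Fintype.card VH := by
  rw [← Nat.card_coe_set_eq, Nat.card_range_of_injective Sum.inl_injective,
    Nat.card_eq_fintype_card]

lemma card_sum_concrete :
    Fintype.card (VH ⊕ W) = Fintype.card VH + k * (ℓ + 1) := by
  simp

lemma hcs_concrete (hk : 1 ≤ k) (ht : 1 ≤ Fintype.card VH)
    (hcm : ∀ x y z : VH, Hᶜ.Adj x y → Hᶜ.Adj y z → x ≠ z → Hᶜ.Adj x z) :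
    ∀ v w : VH ⊕ W, (B).Adj v w →
      (closeSet (B) s(v, w)).ncard < Fintype.card (VH ⊕ W) := by
  have hk1 : 1 * 1 ≤ k * (ℓ + 1) := Nat.mul_le_mul hk (Nat.succ_le_succ (Nat.zero_le ℓ))
  have hkl : ℓ + 1 ≤ k * (ℓ + 1) := Nat.le_mul_of_pos_left _ hk
  rintro (a | p) (b | q) h
  · rw [closeSet_ll H k ℓ hcm ((adj_ll H k ℓ a b).mp h), ncard_range_inl,
      card_sum_concrete]
    omega
  · exact absurd h (adj_lr H k ℓ a q)
  · exact absurd h (adj_rl H k ℓ p b)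
  · obtain ⟨h1, h2⟩ := (adj_rr H k ℓ p q).mp h
    have hq : q = (p.1, q.2) := Prod.ext h1.symm rfl
    have hp : p = (p.1, p.2) := rfl
    rw [hp, hq, closeSet_rr H k ℓ p.1 h2, ncard_range_inr, card_sum_concrete]
    omega

end Concrete

/-- If `H` is complete multipartite with `t` vertices and `m > t` edges,
then the disjoint union `B` of `H` with `m−t` copies of `K_{1,m−1}` has as many edges as
vertices, all vertices of `B` have co-betweenness `1/(m−t)`, and the complement of `B`
is betweenness-uniform with betweenness value 1. -/
theorem stmt16 {VH : Type*} [Fintype VH] [DecidableEq VH] (H : SimpleGraph VH)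
    (m t : ℕ) (hcard : Fintype.card VH = t) (hedges : Nat.card H.edgeSet = m) (hmt : t < m)
    (hcm : ∀ x y z : VH, Hᶜ.Adj x y → Hᶜ.Adj y z → x ≠ z → Hᶜ.Adj x z) :
    Nat.card (sumGraph H (copies (m - t) (starG (m - 1)))).edgeSet =
      Fintype.card (VH ⊕ Fin (m - t) × Fin (m - 1 + 1)) ∧
    (∀ x, coB (sumGraph H (copies (m - t) (starG (m - 1)))) x = 1 / ((m : ℝ) - t)) ∧
    IsBUG (sumGraph H (copies (m - t) (starG (m - 1))))ᶜ ∧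
    ∀ x, btw (sumGraph H (copies (m - t) (starG (m - 1))))ᶜ x = 1 := by
  classical
  set k := m - t with hk_def
  set ℓ := m - 1 with hl_def
  have hm0 : 0 < m := Nat.lt_of_le_of_lt (Nat.zero_le t) hmt
  have ht2 : 2 ≤ t := by
    have hpos : 0 < Nat.card H.edgeSet := by rw [hedges]; exact hm0
    have hne : Nonempty H.edgeSet := by
      by_contra hc
      rw [not_nonempty_iff] at hc
      rw [@Nat.card_of_isEmpty _ hc] at hpos
      omega
    obtain ⟨⟨e, he⟩⟩ := hne
    rw [← hcard]
    induction e using Sym2.ind with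
    | _ u v =>
      rw [SimpleGraph.mem_edgeSet] at he
      have : Nontrivial VH := ⟨u, v, he.ne⟩
      exact Fintype.one_lt_card_iff_nontrivial.mpr this
  have hk1 : 1 ≤ k := by omega
  have hl1 : 1 ≤ ℓ := by omega
  have htc : 1 ≤ Fintype.card VH := by omega
  have hkR : (k:ℝ) = (m:ℝ) - t := by
    rw [hk_def, Nat.cast_sub hmt.le]
  have hlR : (ℓ:ℝ) = (m:ℝ) - 1 := by
    rw [hl_def, Nat.cast_sub (by omega)]; norm_num
  have hkR0 : (k:ℝ) ≠ 0 := Nat.cast_ne_zero.mpr (by omega)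
  have hlR0 : (ℓ:ℝ) ≠ 0 := Nat.cast_ne_zero.mpr (by omega)
  have hmR0 : (m:ℝ) ≠ 0 := Nat.cast_ne_zero.mpr (by omega)
  set N := Fintype.card (VH ⊕ Fin k × Fin (ℓ+1)) with hN_def
  have hNval : N = t + k * (ℓ+1) := by
    rw [hN_def, card_sum_concrete, hcard]
  have hNR : (N:ℝ) = (t:ℝ) + k * ((ℓ:ℝ)+1) := by rw [hNval]; push_cast; ring
  have hHcard : (H.edgeFinset.card : ℕ) = m := by
    rw [SimpleGraph.edgeFinset_card, ← Nat.card_eq_fintype_card, hedges]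
  have hHcardR : ((H.edgeFinset.card : ℕ) : ℝ) = (m:ℝ) := by exact_mod_cast hHcard
  have hcs := hcs_concrete H k ℓ hk1 htc hcm
  have e1 : (N:ℝ) - ((ℓ:ℝ)+1) = (k:ℝ) * ℓ := by rw [hNR, hkR, hlR]; ring
  have e2 : (N:ℝ) - t = (k:ℝ) * ((ℓ:ℝ)+1) := by rw [hNR]; ring
  have hl1m : (ℓ:ℝ) + 1 = (m:ℝ) := by rw [hlR]; ring
  -- betweenness of the complement
  have hbtw : ∀ x, btw (sumGraph H (copies k (starG ℓ)))ᶜ x = 1 := by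
    intro x
    rw [btw_compl_eq _ hcs x]
    have key := double_sum_eval H k ℓ
      (fun v w => if x ∈ closeSet (sumGraph H (copies k (starG ℓ))) s(v, w) then 0
        else 1 / ((N : ℝ) - ((closeSet (sumGraph H (copies k (starG ℓ))) s(v, w)).ncard : ℝ)))
      (if x ∈ Set.range (Sum.inl : VH → VH ⊕ Fin k × Fin (ℓ+1)) then 0
        else 1 / ((N : ℝ) - (Fintype.card VH : ℝ)))
      (fun i => if x ∈ Set.range (fun j : Fin (ℓ+1) =>
          (Sum.inr (i, j) : VH ⊕ Fin k × Fin (ℓ+1))) then 0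
        else 1 / ((N : ℝ) - ((ℓ + 1 : ℕ) : ℝ)))
      (fun a b hab => by
        rw [closeSet_ll H k ℓ hcm hab, ncard_range_inl]
        congr 1)
      (fun i p q hpq => by
        rw [closeSet_rr H k ℓ i hpq, ncard_range_inr]
        congr 1)
    rw [key]
    cases x with
    | inl a0 =>
      rw [if_pos ⟨a0, rfl⟩]
      have hψ : ∀ i : Fin k,
          (if (Sum.inl a0 : VH ⊕ Fin k × Fin (ℓ+1)) ∈ Set.range (fun j : Fin (ℓ+1) =>
            (Sum.inr (i, j) : VH ⊕ Fin k × Fin (ℓ+1))) then (0:ℝ)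
            else 1 / ((N : ℝ) - ((ℓ + 1 : ℕ) : ℝ)))
          = 1 / ((N : ℝ) - ((ℓ + 1 : ℕ) : ℝ)) := by
        intro i
        rw [if_neg]
        rintro ⟨j, hj⟩
        simp at hj
      rw [Finset.sum_congr rfl fun i _ => hψ i, Finset.sum_const, Finset.card_univ,
        Fintype.card_fin, nsmul_eq_mul]
      have hc2 : ((ℓ + 1 : ℕ) : ℝ) = (ℓ:ℝ) + 1 := by push_cast; ring
      rw [hc2, e1]
      field_simp
      ring
    | inr pr =>
      obtain ⟨i0, j0⟩ := pr
      rw [if_neg (by rintro ⟨c, hc⟩; simp at hc)]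
      have hψ : ∀ i : Fin k,
          (if (Sum.inr (i0, j0) : VH ⊕ Fin k × Fin (ℓ+1)) ∈ Set.range (fun j : Fin (ℓ+1) =>
            (Sum.inr (i, j) : VH ⊕ Fin k × Fin (ℓ+1))) then (0:ℝ)
            else 1 / ((N : ℝ) - ((ℓ + 1 : ℕ) : ℝ)))
          = if i = i0 then 0 else 1 / ((N : ℝ) - ((ℓ + 1 : ℕ) : ℝ)) := by
        intro i
        by_cases hi : i = i0
        · subst hi; rw [if_pos ⟨j0, rfl⟩, if_pos rfl]
        · rw [if_neg, if_neg hi]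
          rintro ⟨j, hj⟩
          simp only [Sum.inr.injEq, Prod.mk.injEq] at hj
          exact hi hj.1
      rw [Finset.sum_congr rfl fun i _ => hψ i]
      have hsum : ∑ i : Fin k, (if i = i0 then (0:ℝ)
          else 1 / ((N : ℝ) - ((ℓ + 1 : ℕ) : ℝ)))
          = (k:ℝ) * (1 / ((N : ℝ) - ((ℓ + 1 : ℕ) : ℝ)))
            - 1 / ((N : ℝ) - ((ℓ + 1 : ℕ) : ℝ)) := by
        have : ∀ i : Fin k, (if i = i0 then (0:ℝ)
            else 1 / ((N : ℝ) - ((ℓ + 1 : ℕ) : ℝ)))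
            = 1 / ((N : ℝ) - ((ℓ + 1 : ℕ) : ℝ))
              - (if i = i0 then 1 / ((N : ℝ) - ((ℓ + 1 : ℕ) : ℝ)) else 0) := by
          intro i; split_ifs <;> ring
        rw [Finset.sum_congr rfl fun i _ => this i, Finset.sum_sub_distrib,
          Finset.sum_const, Finset.card_univ, Fintype.card_fin, nsmul_eq_mul]
        simp
      rw [hsum]
      have hc2 : ((ℓ + 1 : ℕ) : ℝ) = (ℓ:ℝ) + 1 := by push_cast; ring
      rw [hc2, e1, hcard, e2, hHcardR, hl1m]
      field_simp
      ring
  -- edge count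
  have hecardR : (((sumGraph H (copies k (starG ℓ))).edgeFinset.card : ℕ) : ℝ)
      = (m:ℝ) + k * ℓ := by
    have hd := H_double (sumGraph H (copies k (starG ℓ)))
    have he := double_sum_eval H k ℓ (fun _ _ => (1:ℝ)) 1 (fun _ => 1)
      (fun _ _ _ => rfl) (fun _ _ _ _ => rfl)
    rw [he] at hd
    rw [Finset.sum_const, Finset.card_univ, Fintype.card_fin, nsmul_eq_mul, mul_one] at hd
    rw [hHcardR] at hd
    linarith
  have hedgecount : Nat.card (sumGraph H (copies k (starG ℓ))).edgeSet = N := by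
    have h1 : Nat.card (sumGraph H (copies k (starG ℓ))).edgeSet
        = (sumGraph H (copies k (starG ℓ))).edgeFinset.card := by
      rw [SimpleGraph.edgeFinset_card, Nat.card_eq_fintype_card]
    have h2 : (((sumGraph H (copies k (starG ℓ))).edgeFinset.card : ℕ) : ℝ) = (N:ℝ) := by
      rw [hecardR, hNR, hkR, hlR]; ring
    have h3 : (sumGraph H (copies k (starG ℓ))).edgeFinset.card = N := by
      exact_mod_cast h2
    rw [h1, h3]
  -- co-betweenness
  have hcoB : ∀ x, coB (sumGraph H (copies k (starG ℓ))) x = 1 / ((m:ℝ) - t) := by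
    intro x
    rw [coB_eq_half]
    have key := double_sum_eval H k ℓ
      (fun v w => if x ∈ closeSet (sumGraph H (copies k (starG ℓ))) s(v, w)
        then weight (sumGraph H (copies k (starG ℓ))) s(v, w) else 0)
      (if x ∈ Set.range (Sum.inl : VH → VH ⊕ Fin k × Fin (ℓ+1))
        then 1 / ((N : ℝ) - (Fintype.card VH : ℝ)) else 0)
      (fun i => if x ∈ Set.range (fun j : Fin (ℓ+1) =>
          (Sum.inr (i, j) : VH ⊕ Fin k × Fin (ℓ+1)))
        then 1 / ((N : ℝ) - ((ℓ + 1 : ℕ) : ℝ)) else 0)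
      (fun a b hab => by
        simp only [weight]
        rw [closeSet_ll H k ℓ hcm hab, ncard_range_inl]
        congr 1)
      (fun i p q hpq => by
        simp only [weight]
        rw [closeSet_rr H k ℓ i hpq, ncard_range_inr]
        congr 1)
    rw [key]
    have hc2 : ((ℓ + 1 : ℕ) : ℝ) = (ℓ:ℝ) + 1 := by push_cast; ring
    cases x with
    | inl a0 =>
      rw [if_pos ⟨a0, rfl⟩]
      have hψ : ∀ i : Fin k,
          (if (Sum.inl a0 : VH ⊕ Fin k × Fin (ℓ+1)) ∈ Set.range (fun j : Fin (ℓ+1) =>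
            (Sum.inr (i, j) : VH ⊕ Fin k × Fin (ℓ+1)))
            then 1 / ((N : ℝ) - ((ℓ + 1 : ℕ) : ℝ)) else (0:ℝ)) = 0 := by
        intro i
        rw [if_neg]
        rintro ⟨j, hj⟩
        simp at hj
      rw [Finset.sum_congr rfl fun i _ => hψ i, Finset.sum_const, smul_zero]
      rw [hcard, e2, hHcardR, hl1m, ← hkR]
      field_simp
      ring
    | inr pr =>
      obtain ⟨i0, j0⟩ := pr
      rw [if_neg (by rintro ⟨c, hc⟩; simp at hc)]
      have hψ : ∀ i : Fin k,
          (if (Sum.inr (i0, j0) : VH ⊕ Fin k × Fin (ℓ+1)) ∈ Set.range (fun j : Fin (ℓ+1) =>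
            (Sum.inr (i, j) : VH ⊕ Fin k × Fin (ℓ+1)))
            then 1 / ((N : ℝ) - ((ℓ + 1 : ℕ) : ℝ)) else (0:ℝ))
          = if i = i0 then 1 / ((N : ℝ) - ((ℓ + 1 : ℕ) : ℝ)) else 0 := by
        intro i
        by_cases hi : i = i0
        · subst hi; rw [if_pos ⟨j0, rfl⟩, if_pos rfl]
        · rw [if_neg, if_neg hi]
          rintro ⟨j, hj⟩
          simp only [Sum.inr.injEq, Prod.mk.injEq] at hj
          exact hi hj.1
      rw [Finset.sum_congr rfl fun i _ => hψ i]
      have hsum : ∑ i : Fin k, (if i = i0 then 1 / ((N : ℝ) - ((ℓ + 1 : ℕ) : ℝ)) else (0:ℝ))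
          = 1 / ((N : ℝ) - ((ℓ + 1 : ℕ) : ℝ)) := by simp
      rw [hsum, hc2, e1, ← hkR]
      field_simp
      ring
  exact ⟨hedgecount, hcoB, fun x y => by rw [hbtw x, hbtw y], hbtw⟩

end BUG
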